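/- (Proposition 1(ii).) Let Λ be a jointly continuous map assigning to each triple (Σ,Ω,R), with Σ and Ω n×n real symmetric positive semidefinite matrices and R an arbitrary n×n real matrix, an n×n real matrix, which is split-invariant, rotation-invariant, and strongly fragmentation invariant. Then Λ is strongly cross-stable: for every triple (Σ,Ω,R) with Ω positive definite and every nonzero linear subspace V of ℝⁿ, Π̄_V Λ(Σ^q_ε, Ω^q_ε, R^q_ε) Π̄_V converges, as ε → 0⁺, to Π̄_V Λ(Π̄_V Σ Π̄_V, Π̄_V Ω Π̄_V, Π̄_V R Π̄_V) Π̄_V. -/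

import Mathlib

open Matrix
open scoped Classical

/-- `sqrtm A` is the unique symmetric positive semidefinite square root of a
symmetric positive semidefinite real matrix `A` (junk value `0` otherwise). -/
noncomputable def sqrtm {n : ℕ} (A : Matrix (Fin n) (Fin n) ℝ) : Matrix (Fin n) (Fin n) ℝ :=
  if h : A.PosSemidef then
    h.1.eigenvectorUnitary.1 * diagonal (Real.sqrt ∘ h.1.eigenvalues) *
      (star h.1.eigenvectorUnitary : Matrix (Fin n) (Fin n) ℝ) else 0

/-- The Kyle cross-impact matrix `Λ_kyle(Σ,Ω) = (√Ω)⁻¹ √(√Ω Σ √Ω) (√Ω)⁻¹`. -/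
noncomputable def kyle {n : ℕ} (S W : Matrix (Fin n) (Fin n) ℝ) : Matrix (Fin n) (Fin n) ℝ :=
  (sqrtm W)⁻¹ * sqrtm (sqrtm W * S * sqrtm W) * (sqrtm W)⁻¹

/-- The matrix of the orthogonal projection of `ℝⁿ` (with the standard inner product)
onto the linear subspace `V`. -/
noncomputable def projMat {n : ℕ} (V : Submodule ℝ (EuclideanSpace ℝ (Fin n))) :
    Matrix (Fin n) (Fin n) ℝ :=
  LinearMap.toMatrix' ((EuclideanSpace.equiv (Fin n) ℝ).toLinearMap ∘ₗ V.subtype ∘ₗ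
    (V.orthogonalProjectionOnto).toLinearMap ∘ₗ ((EuclideanSpace.equiv (Fin n) ℝ).symm.toLinearMap))

/-- The regularizing matrix `Π̄_V + ε Π_V`. -/
noncomputable def reg {n : ℕ} (V : Submodule ℝ (EuclideanSpace ℝ (Fin n))) (ε : ℝ) :
    Matrix (Fin n) (Fin n) ℝ :=
  (1 - projMat V) + ε • projMat V

section Proj
variable {n : ℕ} (V : Submodule ℝ (EuclideanSpace ℝ (Fin n)))

lemma projMat_mulVec (x : Fin n → ℝ) :
    (projMat V).mulVec x = (EuclideanSpace.equiv (Fin n) ℝ)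
      (V.subtype (V.orthogonalProjectionOnto ((EuclideanSpace.equiv (Fin n) ℝ).symm x))) := by
  rw [projMat, ← Matrix.toLin'_apply, Matrix.toLin'_toMatrix']
  rfl

lemma projMat_idem : projMat V * projMat V = projMat V := by
  rw [projMat, ← LinearMap.toMatrix'_comp]
  congr 1
  ext x i
  change (↑(V.orthogonalProjectionOnto ((V.orthogonalProjectionOnto ((EuclideanSpace.equiv (Fin n) ℝ).symm (Pi.single x 1)) : V) : EuclideanSpace ℝ (Fin n))) : EuclideanSpace ℝ (Fin n)) i = _
  rw [Submodule.orthogonalProjectionOnto_mem_subspace_eq_self]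
  rfl

lemma equiv_symm_single (b : Fin n) :
    (EuclideanSpace.equiv (Fin n) ℝ).symm (Pi.single b 1) = EuclideanSpace.single b (1:ℝ) := by
  ext i
  simp [EuclideanSpace.single_apply, Pi.single_apply]

lemma projMat_apply (a b : Fin n) :
    projMat V a b = (inner ℝ ((V.orthogonalProjectionOnto (EuclideanSpace.single b 1) : EuclideanSpace ℝ (Fin n))) (EuclideanSpace.single a (1:ℝ)) : ℝ) := by
  rw [projMat, LinearMap.toMatrix'_apply]
  simp only [LinearMap.comp_apply]
  change (↑(V.orthogonalProjectionOnto (EuclideanSpace.single b (1:ℝ))) : EuclideanSpace ℝ (Fin n)) a = _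
  rw [EuclideanSpace.inner_single_right]
  simp

lemma projMat_symm : (projMat V)ᵀ = projMat V := by
  ext i j
  rw [Matrix.transpose_apply, projMat_apply, projMat_apply]
  rw [real_inner_comm]
  exact (Submodule.inner_starProjection_left_eq_right V _ _).symm

lemma projMat_mulVec_self {v : EuclideanSpace ℝ (Fin n)} (hv : v ∈ V) :
    (projMat V).mulVec (EuclideanSpace.equiv (Fin n) ℝ v) = EuclideanSpace.equiv (Fin n) ℝ v := by
  rw [projMat_mulVec]
  change (EuclideanSpace.equiv (Fin n) ℝ) ((V.orthogonalProjectionOnto ((⟨v, hv⟩ : V) : EuclideanSpace ℝ (Fin n)) : V) : EuclideanSpace ℝ (Fin n)) = _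
  rw [Submodule.orthogonalProjectionOnto_mem_subspace_eq_self]

lemma Pb_idem : (1 - projMat V) * (1 - projMat V) = 1 - projMat V := by
  have h := projMat_idem V
  noncomm_ring [h]

lemma Pb_mul_P : (1 - projMat V) * projMat V = 0 := by
  have h := projMat_idem V
  noncomm_ring [h]

lemma P_mul_Pb : projMat V * (1 - projMat V) = 0 := by
  have h := projMat_idem V
  noncomm_ring [h]

lemma Pb_symm : (1 - projMat V)ᵀ = 1 - projMat V := by
  rw [Matrix.transpose_sub, Matrix.transpose_one, projMat_symm]

lemma reg_symm (ε : ℝ) : (reg V ε)ᵀ = reg V ε := by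
  rw [reg, Matrix.transpose_add, Matrix.transpose_smul, Pb_symm, projMat_symm]

lemma reg_mul_reg (a b : ℝ) : reg V a * reg V b = reg V (a * b) := by
  simp only [reg, mul_add, add_mul, Matrix.mul_smul, Matrix.smul_mul, Pb_idem, Pb_mul_P,
    P_mul_Pb, projMat_idem, smul_smul, smul_zero, add_zero, zero_add, mul_comm b a]

lemma reg_zero : reg V 0 = 1 - projMat V := by
  simp [reg]

lemma reg_one : reg V 1 = 1 := by
  simp [reg]

lemma Pb_mul_reg (ε : ℝ) : (1 - projMat V) * reg V ε = 1 - projMat V := by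
  simp only [reg, mul_add, Matrix.mul_smul, Pb_idem, Pb_mul_P, smul_zero, add_zero]

lemma reg_mul_Pb (ε : ℝ) : reg V ε * (1 - projMat V) = 1 - projMat V := by
  simp only [reg, add_mul, Matrix.smul_mul, Pb_idem, P_mul_Pb, smul_zero, add_zero]

lemma dot_self_pos {m : ℕ} {v : Fin m → ℝ} (hv : v ≠ 0) : 0 < v ⬝ᵥ v := by
  have h0 : (0:ℝ) ≤ v ⬝ᵥ v := by simpa using dotProduct_star_self_nonneg v
  rcases h0.lt_or_eq with h | h
  · exact h
  · exact absurd (dotProduct_self_eq_zero.mp h.symm) hv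

lemma reg_posDef {ε : ℝ} (hε : 0 < ε) : (reg V ε).PosDef := by
  refine Matrix.PosDef.of_dotProduct_mulVec_pos ?_ ?_
  · rw [Matrix.IsHermitian, Matrix.conjTranspose_eq_transpose_of_trivial, reg_symm]
  · intro x hx
    set y := (projMat V).mulVec x with hy
    have hyy : x ⬝ᵥ y = y ⬝ᵥ y := by
      have h1 : (projMat V).mulVec y = y := by
        rw [hy, Matrix.mulVec_mulVec, projMat_idem]
      calc x ⬝ᵥ y = x ⬝ᵥ (projMat V).mulVec y := by rw [h1]
        _ = (x ᵥ* projMat V) ⬝ᵥ y := by rw [Matrix.dotProduct_mulVec]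
        _ = ((projMat V)ᵀ *ᵥ x) ⬝ᵥ y := by rw [Matrix.mulVec_transpose]
        _ = y ⬝ᵥ y := by rw [projMat_symm]
    have hreg : (reg V ε).mulVec x = (x - y) + ε • y := by
      rw [reg, Matrix.add_mulVec, Matrix.sub_mulVec, Matrix.one_mulVec, Matrix.smul_mulVec]
    have hquad : star x ⬝ᵥ (reg V ε).mulVec x = (x - y) ⬝ᵥ (x - y) + ε * (y ⬝ᵥ y) := by
      rw [show star x = x from rfl, hreg]
      simp only [dotProduct_add, dotProduct_sub, sub_dotProduct, dotProduct_smul, smul_eq_mul,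
        dotProduct_comm y x, hyy]
      try ring
    rw [hquad]
    rcases eq_or_ne y 0 with h0 | h0
    · have hxy0 : x - y ≠ 0 := by simpa [h0] using hx
      have h2 := dot_self_pos hxy0
      have h3 : (0:ℝ) ≤ ε * (y ⬝ᵥ y) := by simp [h0]
      linarith
    · have hyypos := dot_self_pos h0
      have h1 : (0:ℝ) ≤ (x - y) ⬝ᵥ (x - y) := by
        simpa using dotProduct_star_self_nonneg (x - y)
      have := mul_pos hε hyypos
      linarith

end Proj

lemma psd_conj {n : ℕ} {S : Matrix (Fin n) (Fin n) ℝ} (hS : S.PosSemidef)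
    (B : Matrix (Fin n) (Fin n) ℝ) : (B * S * Bᵀ).PosSemidef := by
  have := hS.mul_mul_conjTranspose_same B
  rwa [Matrix.conjTranspose_eq_transpose_of_trivial] at this

lemma gensplit {n : ℕ}
    (Λ : Matrix (Fin n) (Fin n) ℝ → Matrix (Fin n) (Fin n) ℝ → Matrix (Fin n) (Fin n) ℝ → Matrix (Fin n) (Fin n) ℝ)
    (hsplit : ∀ S W R : Matrix (Fin n) (Fin n) ℝ, S.PosSemidef → W.PosSemidef → ∀ d : Fin n → ℝ, (∀ i, 0 < d i) →
      Λ ((diagonal d)⁻¹ * S * (diagonal d)⁻¹) (diagonal d * W * diagonal d)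
        ((diagonal d)⁻¹ * R * diagonal d)
        = (diagonal d)⁻¹ * Λ S W R * (diagonal d)⁻¹)
    (hrot : ∀ S W R : Matrix (Fin n) (Fin n) ℝ, S.PosSemidef → W.PosSemidef → ∀ O : Matrix (Fin n) (Fin n) ℝ, O * Oᵀ = 1 →
      Λ (O * S * Oᵀ) (O * W * Oᵀ) (O * R * Oᵀ) = O * Λ S W R * Oᵀ)
    (S W R M : Matrix (Fin n) (Fin n) ℝ) (hS : S.PosSemidef) (hW : W.PosSemidef)
    (hM : M.PosDef) :
    Λ (M⁻¹ * S * M⁻¹) (M * W * M) (M⁻¹ * R * M) = M⁻¹ * Λ S W R * M⁻¹ := by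
  set O : Matrix (Fin n) (Fin n) ℝ := (Matrix.IsHermitian.eigenvectorUnitary hM.1 : Matrix (Fin n) (Fin n) ℝ) with hO
  set d : Fin n → ℝ := hM.1.eigenvalues with hd
  have hdpos : ∀ i, 0 < d i := hM.eigenvalues_pos
  have hstar : star O = Oᵀ := by
    rw [Matrix.star_eq_conjTranspose, Matrix.conjTranspose_eq_transpose_of_trivial]
  have hOO : O * Oᵀ = 1 := by
    rw [← hstar]
    exact (Matrix.mem_unitaryGroup_iff).mp (Matrix.IsHermitian.eigenvectorUnitary hM.1).2
  have hOtO : Oᵀ * O = 1 := by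
    rw [← hstar]
    exact (Matrix.mem_unitaryGroup_iff').mp (Matrix.IsHermitian.eigenvectorUnitary hM.1).2
  set D : Matrix (Fin n) (Fin n) ℝ := diagonal d with hD
  have hspec : M = O * D * Oᵀ := by
    have := hM.1.spectral_theorem
    rwa [Unitary.conjStarAlgAut_apply, hstar, show (RCLike.ofReal ∘ hM.1.eigenvalues : Fin n → ℝ) = d from rfl] at this
  set Di : Matrix (Fin n) (Fin n) ℝ := diagonal (fun i => (d i)⁻¹) with hDi
  have hDDi : D * Di = 1 := by
    rw [hD, hDi, Matrix.diagonal_mul_diagonal]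
    rw [show (fun i => d i * (d i)⁻¹) = fun _ : Fin n => (1:ℝ) by
      funext i; exact mul_inv_cancel₀ (hdpos i).ne', Matrix.diagonal_one]
  have hDiD : Di * D = 1 := by
    rw [hD, hDi, Matrix.diagonal_mul_diagonal]
    rw [show (fun i => (d i)⁻¹ * d i) = fun _ : Fin n => (1:ℝ) by
      funext i; exact inv_mul_cancel₀ (hdpos i).ne', Matrix.diagonal_one]
  have hDinv : D⁻¹ = Di := Matrix.inv_eq_right_inv hDDi
  set N : Matrix (Fin n) (Fin n) ℝ := O * Di * Oᵀ with hN
  have hMN : M * N = 1 := by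
    rw [hspec, hN]
    calc O * D * Oᵀ * (O * Di * Oᵀ) = O * (D * ((Oᵀ * O) * (Di * Oᵀ))) := by
          simp only [Matrix.mul_assoc]
      _ = O * ((D * Di) * Oᵀ) := by rw [hOtO, one_mul, Matrix.mul_assoc]
      _ = O * Oᵀ := by rw [hDDi, one_mul]
      _ = 1 := hOO
  have hMinv : M⁻¹ = N := Matrix.inv_eq_right_inv hMN
  have hDit : Diᵀ = Di := Matrix.diagonal_transpose _
  have hDt : Dᵀ = D := Matrix.diagonal_transpose _
  set S' : Matrix (Fin n) (Fin n) ℝ := Oᵀ * S * O with hS'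
  set W' : Matrix (Fin n) (Fin n) ℝ := Oᵀ * W * O with hW'
  set R' : Matrix (Fin n) (Fin n) ℝ := Oᵀ * R * O with hR'
  have hS'psd : S'.PosSemidef := by
    have := psd_conj hS Oᵀ
    rwa [Matrix.transpose_transpose] at this
  have hW'psd : W'.PosSemidef := by
    have := psd_conj hW Oᵀ
    rwa [Matrix.transpose_transpose] at this
  have claim1 : N * S * N = O * (Di * S' * Di) * Oᵀ := by
    rw [hN, hS']; simp only [Matrix.mul_assoc]
  have claim2 : M * W * M = O * (D * W' * D) * Oᵀ := by
    rw [hspec, hW']; simp only [Matrix.mul_assoc]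
  have claim3 : N * R * M = O * (Di * R' * D) * Oᵀ := by
    rw [hN, hspec, hR']; simp only [Matrix.mul_assoc]
  have hinner1 : (Di * S' * Di).PosSemidef := by
    have := psd_conj hS'psd Di
    rwa [hDit] at this
  have hinner2 : (D * W' * D).PosSemidef := by
    have := psd_conj hW'psd D
    rwa [hDt] at this
  have hsp := hsplit S' W' R' hS'psd hW'psd d hdpos
  rw [show (diagonal d)⁻¹ = Di from hDinv, ← hD] at hsp
  have hrot1 := hrot (Di * S' * Di) (D * W' * D) (Di * R' * D) hinner1 hinner2 O hOO
  have hrot2 := hrot S W R hS hW Oᵀ (by rw [Matrix.transpose_transpose]; exact hOtO)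
  rw [Matrix.transpose_transpose] at hrot2
  rw [hMinv, claim1, claim2, claim3, hrot1, hsp, hS', hW', hR', hrot2, hN]
  simp only [Matrix.mul_assoc]

/-- Proposition 1(ii): a jointly continuous, split- and rotation-invariant,
strongly fragmentation invariant cross-impact model is strongly cross-stable. -/
theorem strongFragmentation_implies_strongCrossStability {n : ℕ}
    (Λ : Matrix (Fin n) (Fin n) ℝ → Matrix (Fin n) (Fin n) ℝ → Matrix (Fin n) (Fin n) ℝ → Matrix (Fin n) (Fin n) ℝ)
    (hcont : ContinuousOn
      (fun p : Matrix (Fin n) (Fin n) ℝ × Matrix (Fin n) (Fin n) ℝ × Matrix (Fin n) (Fin n) ℝ => Λ p.1 p.2.1 p.2.2)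
      {p : Matrix (Fin n) (Fin n) ℝ × Matrix (Fin n) (Fin n) ℝ × Matrix (Fin n) (Fin n) ℝ | p.1.PosSemidef ∧ p.2.1.PosSemidef})
    (hsplit : ∀ S W R : Matrix (Fin n) (Fin n) ℝ, S.PosSemidef → W.PosSemidef → ∀ d : Fin n → ℝ, (∀ i, 0 < d i) →
      Λ ((diagonal d)⁻¹ * S * (diagonal d)⁻¹) (diagonal d * W * diagonal d)
        ((diagonal d)⁻¹ * R * diagonal d)
        = (diagonal d)⁻¹ * Λ S W R * (diagonal d)⁻¹)
    (hrot : ∀ S W R : Matrix (Fin n) (Fin n) ℝ, S.PosSemidef → W.PosSemidef → ∀ O : Matrix (Fin n) (Fin n) ℝ, O * Oᵀ = 1 →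
      Λ (O * S * Oᵀ) (O * W * Oᵀ) (O * R * Oᵀ) = O * Λ S W R * Oᵀ)
    (hfrag : ∀ S W R : Matrix (Fin n) (Fin n) ℝ, S.PosSemidef → W.PosSemidef →
      ∀ V : Submodule ℝ (EuclideanSpace ℝ (Fin n)), V ≠ ⊥ →
      (∀ v ∈ V, S.mulVec (EuclideanSpace.equiv (Fin n) ℝ v) = 0) →
      projMat V * Λ S W R = 0 ∧ Λ S W R * projMat V = 0 ∧
      Λ S W R = Λ ((1 - projMat V) * S * (1 - projMat V))
        ((1 - projMat V) * W * (1 - projMat V)) ((1 - projMat V) * R * (1 - projMat V)))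
    (S W R : Matrix (Fin n) (Fin n) ℝ) (hS : S.PosSemidef) (hW : W.PosDef)
    (V : Submodule ℝ (EuclideanSpace ℝ (Fin n))) (hV : V ≠ ⊥) :
    Filter.Tendsto
      (fun ε : ℝ =>
        (1 - projMat V) * Λ S (reg V ε * W * reg V ε) (R * reg V ε) * (1 - projMat V))
      (nhdsWithin 0 (Set.Ioi 0))
      (nhds ((1 - projMat V) * Λ ((1 - projMat V) * S * (1 - projMat V))
        ((1 - projMat V) * W * (1 - projMat V)) ((1 - projMat V) * R * (1 - projMat V))
        * (1 - projMat V))) := by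
  have hWpsd := hW.posSemidef
  set Pb : Matrix (Fin n) (Fin n) ℝ := 1 - projMat V with hPbdef
  set A0 : Matrix (Fin n) (Fin n) ℝ := Pb * S * Pb with hA0def
  set R0 : Matrix (Fin n) (Fin n) ℝ := Pb * R with hR0def
  have hA0 : A0.PosSemidef := by
    have := psd_conj hS Pb
    rwa [hPbdef, Pb_symm, ← hPbdef, ← hA0def] at this
  -- the limit identity via fragmentation invariance
  have hker : ∀ v ∈ V, A0.mulVec (EuclideanSpace.equiv (Fin n) ℝ v) = 0 := by
    intro v hv
    have h1 : Pb.mulVec (EuclideanSpace.equiv (Fin n) ℝ v) = 0 := by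
      rw [hPbdef, Matrix.sub_mulVec, Matrix.one_mulVec, projMat_mulVec_self V hv, sub_self]
    rw [hA0def, ← Matrix.mulVec_mulVec, h1, Matrix.mulVec_zero]
  obtain ⟨-, -, heq⟩ := hfrag A0 W R0 hA0 hWpsd V hV hker
  have hsimp1 : Pb * A0 * Pb = A0 := by
    rw [hA0def]
    calc Pb * (Pb * S * Pb) * Pb = (Pb * Pb) * S * (Pb * Pb) := by simp only [Matrix.mul_assoc]
      _ = Pb * S * Pb := by rw [hPbdef, Pb_idem]
  have hsimp2 : Pb * R0 * Pb = Pb * R * Pb := by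
    rw [hR0def]
    calc Pb * (Pb * R) * Pb = (Pb * Pb) * R * Pb := by simp only [Matrix.mul_assoc]
      _ = Pb * R * Pb := by rw [hPbdef, Pb_idem]
  rw [hsimp1, hsimp2] at heq
  -- convergence of the reparametrized family
  have hregc : Continuous (fun ε : ℝ => reg V ε) := by
    have : Continuous fun ε : ℝ => ε • projMat V := continuous_id.smul continuous_const
    exact continuous_const.add this
  have hpcont : Continuous (fun ε : ℝ =>
      ((reg V ε * S * reg V ε, (W, reg V ε * R)) :
        Matrix (Fin n) (Fin n) ℝ × Matrix (Fin n) (Fin n) ℝ × Matrix (Fin n) (Fin n) ℝ)) :=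
    ((hregc.matrix_mul continuous_const).matrix_mul hregc).prodMk
      (continuous_const.prodMk (hregc.matrix_mul continuous_const))
  have hpath : Filter.Tendsto (fun ε : ℝ =>
      ((reg V ε * S * reg V ε, (W, reg V ε * R)) :
        Matrix (Fin n) (Fin n) ℝ × Matrix (Fin n) (Fin n) ℝ × Matrix (Fin n) (Fin n) ℝ))
      (nhdsWithin 0 (Set.Ioi 0))
      (nhdsWithin (A0, (W, R0))
        {p : Matrix (Fin n) (Fin n) ℝ × Matrix (Fin n) (Fin n) ℝ × Matrix (Fin n) (Fin n) ℝ |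
          p.1.PosSemidef ∧ p.2.1.PosSemidef}) := by
    rw [tendsto_nhdsWithin_iff]
    constructor
    · have h0 := hpcont.tendsto 0
      simp only [reg_zero] at h0
      rw [← hPbdef, ← hA0def, ← hR0def] at h0
      exact h0.mono_left nhdsWithin_le_nhds
    · refine Filter.Eventually.of_forall fun ε => ?_
      refine ⟨?_, hWpsd⟩
      have := psd_conj hS (reg V ε)
      rwa [reg_symm] at this
  have hΛ : Filter.Tendsto (fun ε : ℝ => Λ (reg V ε * S * reg V ε) W (reg V ε * R))
      (nhdsWithin 0 (Set.Ioi 0)) (nhds (Λ A0 W R0)) :=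
    Filter.Tendsto.comp (hcont (A0, (W, R0)) ⟨hA0, hWpsd⟩) hpath
  have hmulcont : Continuous (fun A : Matrix (Fin n) (Fin n) ℝ => Pb * A * Pb) :=
    (continuous_const.matrix_mul continuous_id).matrix_mul continuous_const
  have hfull : Filter.Tendsto
      (fun ε : ℝ => Pb * Λ (reg V ε * S * reg V ε) W (reg V ε * R) * Pb)
      (nhdsWithin 0 (Set.Ioi 0)) (nhds (Pb * Λ A0 W R0 * Pb)) :=
    (hmulcont.tendsto _).comp hΛ
  rw [heq] at hfull
  -- eventual equality with the original family
  refine hfull.congr' ?_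
  filter_upwards [self_mem_nhdsWithin] with ε (hε : 0 < ε)
  set M : Matrix (Fin n) (Fin n) ℝ := reg V ε with hMdef
  have hMpd : M.PosDef := reg_posDef V hε
  have hMS : (M * S * M).PosSemidef := by
    have := psd_conj hS M
    rwa [hMdef, reg_symm] at this
  have key := gensplit Λ hsplit hrot (M * S * M) W (M * R) M hMS hWpsd hMpd
  have hMM' : M * reg V ε⁻¹ = 1 := by
    rw [hMdef, reg_mul_reg, mul_inv_cancel₀ hε.ne', reg_one]
  have hM'M : reg V ε⁻¹ * M = 1 := by
    rw [hMdef, reg_mul_reg, inv_mul_cancel₀ hε.ne', reg_one]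
  have hMinv : M⁻¹ = reg V ε⁻¹ := Matrix.inv_eq_right_inv hMM'
  have e1 : M⁻¹ * (M * S * M) * M⁻¹ = S := by
    calc M⁻¹ * (M * S * M) * M⁻¹ = (M⁻¹ * M) * S * (M * M⁻¹) := by simp only [Matrix.mul_assoc]
      _ = S := by rw [hMinv, hM'M, hMM', one_mul, mul_one]
  have e2 : M⁻¹ * (M * R) * M = R * M := by
    calc M⁻¹ * (M * R) * M = (M⁻¹ * M) * (R * M) := by simp only [Matrix.mul_assoc]
      _ = R * M := by rw [hMinv, hM'M, one_mul]
  rw [e1, e2] at key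
  have hPbMi : Pb * M⁻¹ = Pb := by rw [hMinv, hPbdef, Pb_mul_reg]
  have hMiPb : M⁻¹ * Pb = Pb := by
    have := congrArg Matrix.transpose hPbMi
    rwa [Matrix.transpose_mul, hPbdef, Pb_symm, ← hPbdef,
      show (M⁻¹)ᵀ = M⁻¹ by rw [hMinv, reg_symm]] at this
  rw [key]
  rw [show Pb * (M⁻¹ * Λ (M * S * M) W (M * R) * M⁻¹) * Pb
      = (Pb * M⁻¹) * Λ (M * S * M) W (M * R) * (M⁻¹ * Pb) from by simp only [Matrix.mul_assoc],
    hPbMi, hMiPb]
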